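/- arXiv:1909.09615 — 5 statements merged into one kernel-verified Lean document; each statement's English description precedes it below -/
import Mathlib

section
/- Let A be a real symmetric n×n matrix. Then the Frobenius norm of A satisfies |A| = sup over all orthonormal bases (ξ¹,…,ξⁿ) of ℝⁿ of ( ∑_{i=1}^n |A ξ^i · ξ^i|² )^{1/2}, where A ξ^i · ξ^i denotes the inner product of A ξ^i with ξ^i. Equivalently, the supremum may be taken over the families of column vectors of all orthogonal matrices R ∈ O(n). -/
open scoped BigOperators Matrix

/-- The Frobenius (Euclidean) norm of a real `n × n` matrix. -/
noncomputable def frobeniusNorm {n : ℕ} (A : Matrix (Fin n) (Fin n) ℝ) : ℝ :=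
  Real.sqrt (∑ i, ∑ j, (A i j) ^ 2)

/-- A family of `n` pairwise orthogonal unit vectors in `ℝⁿ`
(hence an orthonormal basis of `ℝⁿ`). -/
def IsOrthonormalFamily {n : ℕ} (ξ : Fin n → (Fin n → ℝ)) : Prop :=
  ∀ i j, ξ i ⬝ᵥ ξ j = if i = j then (1 : ℝ) else 0

/-!
The diagonal of `A` in an orthonormal basis `ξ` is the diagonal of the orthogonally conjugated
matrix `Q A Qᵀ`, where `Q` has rows `ξ i`. Conjugation does not change the sum of squares of the
entries (it is `tr (M Mᵀ)`), and dropping the off-diagonal entries can only decrease it. For a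
symmetric `A` an orthonormal eigenbasis makes `Q A Qᵀ` diagonal, so the supremum is attained.
-/

namespace Matrix

variable {ι κ : Type*} [Fintype ι]

theorem sum_sq_entries_eq_trace_mul_transpose [Fintype κ] (M : Matrix ι κ ℝ) :
    ∑ i, ∑ j, M i j ^ 2 = (M * Mᵀ).trace := by
  simp [trace, mul_apply, sq]

theorem sum_sq_entries_conj_eq [DecidableEq ι] {Q : Matrix ι ι ℝ} (hQ : Q * Qᵀ = 1)
    (A : Matrix ι ι ℝ) : ∑ i, ∑ j, (Q * A * Qᵀ) i j ^ 2 = ∑ i, ∑ j, A i j ^ 2 := by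
  have hQ' : Qᵀ * Q = 1 := mul_eq_one_comm.mp hQ
  rw [sum_sq_entries_eq_trace_mul_transpose, sum_sq_entries_eq_trace_mul_transpose]
  calc (Q * A * Qᵀ * (Q * A * Qᵀ)ᵀ).trace = (Q * (A * Aᵀ) * Qᵀ).trace := by
        simp only [transpose_mul, transpose_transpose, Matrix.mul_assoc]
        rw [← Matrix.mul_assoc Qᵀ Q, hQ', Matrix.one_mul]
    _ = (A * Aᵀ).trace := by rw [trace_mul_cycle, hQ', Matrix.one_mul]

theorem sum_sq_diag_le_sum_sq_entries (M : Matrix ι ι ℝ) :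
    ∑ i, M i i ^ 2 ≤ ∑ i, ∑ j, M i j ^ 2 :=
  Finset.sum_le_sum fun i _ =>
    Finset.single_le_sum (f := fun j => M i j ^ 2) (fun _ _ => sq_nonneg _) (Finset.mem_univ i)

theorem IsDiag.sum_sq_entries_eq {M : Matrix ι ι ℝ} (hM : M.IsDiag) :
    ∑ i, ∑ j, M i j ^ 2 = ∑ i, M i i ^ 2 :=
  Finset.sum_congr rfl fun i _ =>
    Finset.sum_eq_single i (fun j _ hji => by simp [hM hji.symm]) (by simp)

theorem of_mul_mul_transpose_apply (ξ : κ → ι → ℝ) (A : Matrix ι ι ℝ) (i j : κ) :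
    (of ξ * A * (of ξ)ᵀ) i j = A *ᵥ ξ j ⬝ᵥ ξ i := by
  simp only [mul_apply, mulVec, dotProduct, of_apply, transpose_apply, Finset.sum_mul]
  rw [Finset.sum_comm]
  exact Finset.sum_congr rfl fun _ _ => Finset.sum_congr rfl fun _ _ => by ring

end Matrix

open Matrix

theorem IsOrthonormalFamily.mul_transpose_eq_one {n : ℕ} {ξ : Fin n → Fin n → ℝ}
    (hξ : IsOrthonormalFamily ξ) : of ξ * (of ξ)ᵀ = 1 := by
  ext i j
  simpa [mul_apply, one_apply, dotProduct] using hξ i j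

theorem isOrthonormalFamily_of_orthonormal {n : ℕ} {v : Fin n → EuclideanSpace ℝ (Fin n)}
    (hv : Orthonormal ℝ v) : IsOrthonormalFamily fun i => ⇑(v i) := by
  intro i j
  simpa [EuclideanSpace.inner_eq_star_dotProduct, dotProduct_comm] using
    orthonormal_iff_ite.mp hv i j

theorem IsOrthonormalFamily.sum_sq_mulVec_dotProduct_le {n : ℕ} {ξ : Fin n → Fin n → ℝ}
    (hξ : IsOrthonormalFamily ξ) (A : Matrix (Fin n) (Fin n) ℝ) :
    ∑ i, (A *ᵥ ξ i ⬝ᵥ ξ i) ^ 2 ≤ ∑ i, ∑ j, A i j ^ 2 := by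
  calc ∑ i, (A *ᵥ ξ i ⬝ᵥ ξ i) ^ 2 = ∑ i, (of ξ * A * (of ξ)ᵀ) i i ^ 2 := by
        simp only [of_mul_mul_transpose_apply]
    _ ≤ ∑ i, ∑ j, (of ξ * A * (of ξ)ᵀ) i j ^ 2 := sum_sq_diag_le_sum_sq_entries _
    _ = ∑ i, ∑ j, A i j ^ 2 := sum_sq_entries_conj_eq hξ.mul_transpose_eq_one A

theorem IsOrthonormalFamily.sum_sq_mulVec_dotProduct_eq_of_eigen {n : ℕ}
    {ξ : Fin n → Fin n → ℝ} (hξ : IsOrthonormalFamily ξ) {A : Matrix (Fin n) (Fin n) ℝ}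
    {c : Fin n → ℝ}
    (hAξ : ∀ i, A *ᵥ ξ i = c i • ξ i) :
    ∑ i, (A *ᵥ ξ i ⬝ᵥ ξ i) ^ 2 = ∑ i, ∑ j, A i j ^ 2 := by
  have hdiag : (of ξ * A * (of ξ)ᵀ).IsDiag := fun i j hij => by
    simp [of_mul_mul_transpose_apply, hAξ, hξ j i, Ne.symm hij]
  calc ∑ i, (A *ᵥ ξ i ⬝ᵥ ξ i) ^ 2 = ∑ i, (of ξ * A * (of ξ)ᵀ) i i ^ 2 := by
        simp only [of_mul_mul_transpose_apply]
    _ = ∑ i, ∑ j, (of ξ * A * (of ξ)ᵀ) i j ^ 2 := hdiag.sum_sq_entries_eq.symm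
    _ = ∑ i, ∑ j, A i j ^ 2 := sum_sq_entries_conj_eq hξ.mul_transpose_eq_one A

/-- For a real symmetric matrix `A`, the Frobenius norm `|A|` equals the supremum, over all
orthonormal bases `(ξ¹, …, ξⁿ)` of `ℝⁿ`, of `(∑ i, |A ξ i ⬝ ξ i|²)^(1/2)`. -/
theorem frobenius_eq_sup_orthonormal {n : ℕ} (A : Matrix (Fin n) (Fin n) ℝ)
    (hA : A.IsSymm) :
    IsLUB {r : ℝ | ∃ ξ : Fin n → (Fin n → ℝ), IsOrthonormalFamily ξ ∧
        r = Real.sqrt (∑ i, |A.mulVec (ξ i) ⬝ᵥ ξ i| ^ 2)}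
      (frobeniusNorm A) := by
  have hH : A.IsHermitian := isHermitian_iff_isSymm.mpr hA
  have heigen : IsOrthonormalFamily fun i => ⇑(hH.eigenvectorBasis i) :=
    isOrthonormalFamily_of_orthonormal hH.eigenvectorBasis.orthonormal
  refine IsGreatest.isLUB ⟨⟨_, heigen, ?_⟩, ?_⟩
  · simp only [sq_abs, frobeniusNorm,
      heigen.sum_sq_mulVec_dotProduct_eq_of_eigen hH.mulVec_eigenvectorBasis]
  · rintro r ⟨ξ, hξ, rfl⟩
    simp only [sq_abs]
    exact Real.sqrt_le_sqrt (hξ.sum_sq_mulVec_dotProduct_le A)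
end

section
/- Let (R_j)_{j∈ℕ} be a sequence of orthogonal n×n matrices that is dense in the orthogonal group O(n), and for each j let ξ_j¹,…,ξ_jⁿ denote the column vectors of R_j. Then for every real symmetric n×n matrix A one has |A| = sup_{j∈ℕ} ( ∑_{i=1}^n |A ξ_j^i · ξ_j^i|² )^{1/2}, where |A| is the Frobenius norm. -/
open scoped BigOperators Matrix

/-!
For orthogonal `M`, the numbers `A ξ ⬝ ξ` over the columns `ξ` of `M` are the diagonal entries of
`Mᵀ A M`, whose Frobenius norm equals that of `A`; dropping the off-diagonal entries gives the
upper bound. A symmetric `A` is diagonalised by some orthogonal `M`, where the bound is attained,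
and since `M ↦ ‖diag (Mᵀ A M)‖` is continuous, its values along a dense sequence of `O(n)`
approach this maximum.
-/

namespace Matrix

variable {m n R : Type*} [Fintype m]

lemma sum_sum_sq_eq_trace_mul_transpose [Fintype n] [CommSemiring R] (B : Matrix m n R) :
    ∑ i, ∑ j, B i j ^ 2 = (B * Bᵀ).trace := by
  simp [trace, mul_apply, sq]

lemma sum_sum_sq_transpose_mul_mul [Fintype n] [DecidableEq n] [CommRing R] {M : Matrix n n R} (hM : M * Mᵀ = 1)
    (A : Matrix n n R) : ∑ i, ∑ j, (Mᵀ * A * M) i j ^ 2 = ∑ i, ∑ j, A i j ^ 2 := by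
  have hconj : (Mᵀ * A * M) * (Mᵀ * A * M)ᵀ = Mᵀ * (A * Aᵀ) * M := by
    simp only [transpose_mul, transpose_transpose, Matrix.mul_assoc]
    rw [← Matrix.mul_assoc M Mᵀ, hM, Matrix.one_mul]
  rw [sum_sum_sq_eq_trace_mul_transpose, sum_sum_sq_eq_trace_mul_transpose, hconj,
    trace_mul_comm, ← Matrix.mul_assoc, ← Matrix.mul_assoc, hM, Matrix.one_mul]

lemma mulVec_col_dotProduct_col [CommSemiring R] (A : Matrix m m R) (M : Matrix m n R) (i : n) :
    A *ᵥ Mᵀ i ⬝ᵥ Mᵀ i = (Mᵀ * A * M) i i := by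
  simp only [mul_apply, mulVec, dotProduct, transpose_apply, Finset.sum_mul]
  rw [Finset.sum_comm]
  exact Finset.sum_congr rfl fun _ _ => Finset.sum_congr rfl fun _ _ => by ring

section Ordered

variable [Fintype n] [CommRing R] [LinearOrder R] [IsStrictOrderedRing R]

lemma sum_diag_sq_le_sum_sum_sq (B : Matrix n n R) :
    ∑ i, B i i ^ 2 ≤ ∑ i, ∑ j, B i j ^ 2 :=
  Finset.sum_le_sum fun i _ =>
    Finset.single_le_sum (f := fun j => B i j ^ 2) (fun _ _ => sq_nonneg _) (Finset.mem_univ i)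

lemma IsDiag.sum_sum_sq_eq_sum_diag_sq {B : Matrix n n R} (hB : B.IsDiag) :
    ∑ i, ∑ j, B i j ^ 2 = ∑ i, B i i ^ 2 := by
  refine Finset.sum_congr rfl fun i _ => Finset.sum_eq_single i (fun j _ hji => ?_) (by simp)
  rw [hB hji.symm, sq, zero_mul]

end Ordered

lemma IsSymm.exists_orthogonal_isDiag_transpose_mul_mul [Fintype n] [DecidableEq n] {A : Matrix n n ℝ}
    (hA : A.IsSymm) : ∃ M : Matrix n n ℝ, M * Mᵀ = 1 ∧ (Mᵀ * A * M).IsDiag := by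
  have hAH : A.IsHermitian := isHermitian_iff_isSymm.mpr hA
  have hstar : star (hAH.eigenvectorUnitary : Matrix n n ℝ) = hAH.eigenvectorUnitaryᵀ := by
    rw [star_eq_conjTranspose, conjTranspose_eq_transpose_of_trivial]
  refine ⟨hAH.eigenvectorUnitary, ?_, ?_⟩
  · rw [← hstar]
    exact mem_unitaryGroup_iff.mp hAH.eigenvectorUnitary.2
  · have hdiag := hAH.conjStarAlgAut_star_eigenvectorUnitary
    rw [Unitary.conjStarAlgAut_star_apply, hstar] at hdiag
    exact hdiag ▸ isDiag_diagonal _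

end Matrix

open Matrix

section

variable {n : ℕ}

noncomputable def diagConjNorm (A M : Matrix (Fin n) (Fin n) ℝ) : ℝ :=
  √(∑ i, (Mᵀ * A * M) i i ^ 2)

lemma continuous_diagConjNorm (A : Matrix (Fin n) (Fin n) ℝ) :
    Continuous (diagConjNorm A) := by
  unfold diagConjNorm
  simp only [mul_apply, transpose_apply]
  fun_prop

lemma diagConjNorm_le_frobeniusNorm (A : Matrix (Fin n) (Fin n) ℝ)
    {M : Matrix (Fin n) (Fin n) ℝ} (hM : M * Mᵀ = 1) : diagConjNorm A M ≤ frobeniusNorm A := by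
  refine Real.sqrt_le_sqrt ?_
  rw [← sum_sum_sq_transpose_mul_mul hM A]
  exact sum_diag_sq_le_sum_sum_sq _

lemma diagConjNorm_eq_frobeniusNorm {A M : Matrix (Fin n) (Fin n) ℝ} (hM : M * Mᵀ = 1)
    (hdiag : (Mᵀ * A * M).IsDiag) : diagConjNorm A M = frobeniusNorm A := by
  rw [diagConjNorm, frobeniusNorm, ← hdiag.sum_sum_sq_eq_sum_diag_sq,
    sum_sum_sq_transpose_mul_mul hM A]

end

/-- Let `(R j)` be a sequence of orthogonal `n × n` matrices which is dense in the orthogonal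
group `O(n)`, and let `ξ_j^i := fun k => R j k i` be the columns of `R j`.  Then for every real
symmetric matrix `A`, the Frobenius norm `|A|` is the supremum over `j ∈ ℕ` of
`(∑ i, |A ξ_j^i ⬝ ξ_j^i|²)^(1/2)`. -/
theorem frobenius_eq_sup_dense_rotations {n : ℕ}
    (R : ℕ → Matrix (Fin n) (Fin n) ℝ)
    (hR : ∀ j, R j * (R j)ᵀ = 1)
    (hdense : ∀ M : Matrix (Fin n) (Fin n) ℝ, M * Mᵀ = 1 → M ∈ closure (Set.range R))
    (A : Matrix (Fin n) (Fin n) ℝ) (hA : A.IsSymm) :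
    IsLUB
      (Set.range fun j : ℕ =>
        Real.sqrt (∑ i, |A.mulVec (fun k => R j k i) ⬝ᵥ (fun k => R j k i)| ^ 2))
      (frobeniusNorm A) := by
  have hrange : (fun j : ℕ =>
      √(∑ i, |A.mulVec (fun k => R j k i) ⬝ᵥ (fun k => R j k i)| ^ 2)) = diagConjNorm A ∘ R :=
    funext fun j => by
      simp only [Function.comp_apply, diagConjNorm, sq_abs, ← mulVec_col_dotProduct_col]
      rfl
  rw [hrange, Set.range_comp]
  obtain ⟨M, hM, hdiag⟩ := hA.exists_orthogonal_isDiag_transpose_mul_mul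
  refine isLUB_of_mem_closure ?_ ?_
  · rintro _ ⟨_, ⟨j, rfl⟩, rfl⟩
    exact diagConjNorm_le_frobeniusNorm A (hR j)
  · rw [← diagConjNorm_eq_frobeniusNorm hM hdiag]
    exact mem_closure_image (continuous_diagConjNorm A).continuousAt (hdense M hM)
end

section
/- Let q ∈ (1,∞) and let A be a real symmetric n×n matrix with eigenvalues λ₁,…,λ_n (repeated according to multiplicity). Then sup over all orthonormal bases (ξ¹,…,ξⁿ) of ℝⁿ of ∑_{i=1}^n |A ξ^i · ξ^i|^q equals ∑_{i=1}^n |λ_i|^q; that is, the q-Schatten norm H(A) = (∑_i |λ_i|^q)^{1/q} satisfies H(A)^q = sup_{(ξ¹,…,ξⁿ)} ∑_{i=1}^n |A ξ^i · ξ^i|^q. -/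
/-!
Writing `ξ i` in the orthonormal eigenbasis gives `A ξ i ⬝ ξ i = ∑ j, (ev j ⬝ ξ i)² λ j`, and by
Parseval the weights `(ev j ⬝ ξ i)²` form a doubly stochastic matrix. Jensen's inequality for the
convex function `|x| ^ q` along each row, summed over the columns, bounds `∑ i, |A ξ i ⬝ ξ i| ^ q`
by `∑ j, |λ j| ^ q`, and the eigenbasis itself attains this value.
-/

open scoped BigOperators Matrix

open Finset Matrix

lemma convexOn_abs_rpow {q : ℝ} (hq : 1 ≤ q) : ConvexOn ℝ Set.univ fun x : ℝ => |x| ^ q := by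
  have hnorm : (norm : ℝ → ℝ) '' Set.univ = Set.Ici 0 := by rw [Set.image_univ, range_norm]
  have hmono : MonotoneOn (fun x : ℝ => x ^ q) (Set.Ici 0) := fun x hx y _ hxy =>
    Real.rpow_le_rpow hx hxy (by linarith)
  exact (hnorm ▸ convexOn_rpow hq).comp convexOn_univ_norm (hnorm ▸ hmono)

theorem ConvexOn.sum_map_mulVec_le {𝕜 ι : Type*} [Field 𝕜] [LinearOrder 𝕜]
    [IsStrictOrderedRing 𝕜] [Fintype ι] [DecidableEq ι] {f : 𝕜 → 𝕜} (hf : ConvexOn 𝕜 Set.univ f)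
    {M : Matrix ι ι 𝕜} (hM : M ∈ doublyStochastic 𝕜 ι) (x : ι → 𝕜) :
    ∑ i, f ((M *ᵥ x) i) ≤ ∑ i, f (x i) :=
  calc ∑ i, f ((M *ᵥ x) i) ≤ ∑ i, ∑ j, M i j * f (x j) := sum_le_sum fun i _ =>
        hf.map_sum_le (fun _ _ => nonneg_of_mem_doublyStochastic hM)
          (sum_row_of_mem_doublyStochastic hM i) fun _ _ => trivial
    _ = ∑ j, f (x j) := by
        rw [sum_comm]
        simp only [← sum_mul, sum_col_of_mem_doublyStochastic hM, one_mul]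

namespace IsOrthonormalFamily

variable {n : ℕ} {ξ η : Fin n → Fin n → ℝ}

lemma mul_transpose_eq_one_s4 (hξ : IsOrthonormalFamily ξ) : of ξ * (of ξ)ᵀ = 1 := by
  ext i j
  simpa [mul_apply, dotProduct, one_apply] using hξ i j

lemma sum_dotProduct_smul (hξ : IsOrthonormalFamily ξ) (v : Fin n → ℝ) :
    ∑ j, (ξ j ⬝ᵥ v) • ξ j = v := by
  have h := congrArg (· *ᵥ v) (mul_eq_one_comm.mp hξ.mul_transpose_eq_one_s4)
  simp only [← mulVec_mulVec, one_mulVec] at h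
  conv_rhs => rw [← h]
  ext k
  simp [mulVec, dotProduct, mul_comm]

lemma sum_sq_dotProduct (hξ : IsOrthonormalFamily ξ) (v : Fin n → ℝ) :
    ∑ j, (ξ j ⬝ᵥ v) ^ 2 = v ⬝ᵥ v := by
  calc ∑ j, (ξ j ⬝ᵥ v) ^ 2 = (∑ j, (ξ j ⬝ᵥ v) • ξ j) ⬝ᵥ v := by
        simp only [sum_dotProduct, smul_dotProduct, smul_eq_mul, sq]
    _ = v ⬝ᵥ v := by rw [hξ.sum_dotProduct_smul]

lemma sq_dotProduct_mem_doublyStochastic (hξ : IsOrthonormalFamily ξ)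
    (hη : IsOrthonormalFamily η) :
    of (fun i j => (η j ⬝ᵥ ξ i) ^ 2) ∈ doublyStochastic ℝ (Fin n) := by
  refine mem_doublyStochastic_iff_sum.2 ⟨fun i j => sq_nonneg _, fun i => ?_, fun j => ?_⟩
  · simp [hη.sum_sq_dotProduct, hξ i i]
  · simp_rw [of_apply, dotProduct_comm (η j), hξ.sum_sq_dotProduct, hη j j, if_pos]

lemma mulVec_dotProduct_self {A : Matrix (Fin n) (Fin n) ℝ} {lam : Fin n → ℝ}
    (hξ : IsOrthonormalFamily ξ) (heig : ∀ i, A *ᵥ ξ i = lam i • ξ i) (v : Fin n → ℝ) :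
    A *ᵥ v ⬝ᵥ v = ∑ j, (ξ j ⬝ᵥ v) ^ 2 * lam j := by
  have hAv : A *ᵥ v = ∑ j, (ξ j ⬝ᵥ v * lam j) • ξ j := by
    conv_lhs => rw [← hξ.sum_dotProduct_smul v]
    simp only [mulVec_sum, mulVec_smul, heig, smul_smul]
  simp only [hAv, sum_dotProduct, smul_dotProduct, smul_eq_mul]
  exact sum_congr rfl fun j _ => by ring

end IsOrthonormalFamily

theorem schatten_pow_eq_sup_orthonormal_general {n : ℕ} (q : ℝ) (hq : 1 < q)
    (A : Matrix (Fin n) (Fin n) ℝ)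
    (lam : Fin n → ℝ) (ev : Fin n → (Fin n → ℝ))
    (hev : IsOrthonormalFamily ev)
    (heig : ∀ i, A.mulVec (ev i) = lam i • ev i) :
    IsLUB {r : ℝ | ∃ ξ : Fin n → (Fin n → ℝ), IsOrthonormalFamily ξ ∧
        r = ∑ i, |A.mulVec (ξ i) ⬝ᵥ ξ i| ^ q}
      (∑ i, |lam i| ^ q) := by
  refine ⟨?_, fun b hb => hb ⟨ev, hev, ?_⟩⟩
  · rintro _ ⟨ξ, hξ, rfl⟩
    simp only [hev.mulVec_dotProduct_self heig]
    exact (convexOn_abs_rpow hq.le).sum_map_mulVec_le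
      (hξ.sq_dotProduct_mem_doublyStochastic hev) lam
  · simp [heig, hev _ _]

/-- Let `q ∈ (1, ∞)` and let `A` be a real symmetric `n × n` matrix with eigenvalues
`λ₁, …, λ_n` (repeated according to multiplicity, with a corresponding orthonormal basis of
eigenvectors `ev`).  Then the supremum over all orthonormal bases `(ξ¹, …, ξⁿ)` of `ℝⁿ` of
`∑ i, |A ξ i ⬝ ξ i|^q` equals `∑ i, |λ i|^q`, i.e. the `q`-th power of the `q`-Schatten norm. -/
theorem schatten_pow_eq_sup_orthonormal {n : ℕ} (q : ℝ) (hq : 1 < q)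
    (A : Matrix (Fin n) (Fin n) ℝ) (hA : A.IsSymm)
    (lam : Fin n → ℝ) (ev : Fin n → (Fin n → ℝ))
    (hev : IsOrthonormalFamily ev)
    (heig : ∀ i, A.mulVec (ev i) = lam i • ev i) :
    IsLUB {r : ℝ | ∃ ξ : Fin n → (Fin n → ℝ), IsOrthonormalFamily ξ ∧
        r = ∑ i, |A.mulVec (ξ i) ⬝ᵥ ξ i| ^ q}
      (∑ i, |lam i| ^ q) :=
  schatten_pow_eq_sup_orthonormal_general q hq A lam ev hev heig
end

section
/- (Localization lemma, part 1.) Let Ω ⊆ ℝⁿ be open, let Λ be a [0,+∞]-valued function defined on the family of open subsets of Ω which is superadditive on open sets with disjoint compact closures (i.e. Λ(A) ≥ Λ(A₁) + Λ(A₂) whenever A₁, A₂ are open sets with disjoint compact closures contained in the open set A ⊆ Ω), let λ be a positive Borel measure on Ω, and let φ_j : Ω → [0,+∞], j ∈ ℕ, be Borel functions such that ∫_K φ_j dλ ≤ Λ(A) for every open set A ⊆ Ω, every compact set K ⊆ A, and every j ∈ ℕ. Then ∫_K sup_{j∈ℕ} φ_j dλ ≤ Λ(A) for every open set A ⊆ Ω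 and every compact set K ⊆ A. -/
/-!
Truncating to finite suprema and using monotone convergence, it suffices to show that the bound
`∫_K f ≤ Λ A` passes from `f` and `g` to `f ⊔ g`. Split `K` into `K ∩ {g ≤ f}`, where `f ⊔ g = f`,
and its complement, where `f ⊔ g = g`. By inner regularity each piece carries, up to `ε`, its
integral on a compact subset; the two compacts are disjoint, so they lie in open subsets of `A`
with disjoint compact closures, and superadditivity of `Λ` adds the two bounds.
-/

open MeasureTheory Set
open scoped ENNReal

theorem measurable_partialSups {δ α : Type*} [MeasurableSpace δ] [MeasurableSpace α]
    [SemilatticeSup α] [MeasurableSup₂ α] {f : ℕ → δ → α} (hf : ∀ n, Measurable (f n)) (n : ℕ) :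
    Measurable (partialSups f n) := by
  rw [partialSups_eq_sup'_range]
  exact Finset.measurable_range_sup' fun k _ => hf k

variable {X : Type*} [TopologicalSpace X]

theorem exists_isOpen_separation_isCompact_closure [T2Space X] [LocallyCompactSpace X]
    {A C₁ C₂ : Set X} (hA : IsOpen A) (hC₁ : IsCompact C₁) (hC₂ : IsCompact C₂)
    (hC₁A : C₁ ⊆ A) (hC₂A : C₂ ⊆ A) (hC : Disjoint C₁ C₂) :
    ∃ A₁ A₂ : Set X, IsOpen A₁ ∧ IsOpen A₂ ∧ C₁ ⊆ A₁ ∧ C₂ ⊆ A₂ ∧ A₁ ⊆ A ∧ A₂ ⊆ A ∧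
      IsCompact (closure A₁) ∧ IsCompact (closure A₂) ∧ Disjoint (closure A₁) (closure A₂) := by
  obtain ⟨U₁, U₂, hU₁, hU₂, hC₁U₁, hC₂U₂, hU⟩ := SeparatedNhds.of_isCompact_isCompact hC₁ hC₂ hC
  obtain ⟨A₁, hA₁, hC₁A₁, hA₁U, hA₁c⟩ :=
    exists_open_between_and_isCompact_closure hC₁ (hA.inter hU₁) (subset_inter hC₁A hC₁U₁)
  obtain ⟨A₂, hA₂, hC₂A₂, hA₂U, hA₂c⟩ :=
    exists_open_between_and_isCompact_closure hC₂ (hA.inter hU₂) (subset_inter hC₂A hC₂U₂)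
  exact ⟨A₁, A₂, hA₁, hA₂, hC₁A₁, hC₂A₂,
    subset_closure.trans (hA₁U.trans inter_subset_left),
    subset_closure.trans (hA₂U.trans inter_subset_left), hA₁c, hA₂c,
    hU.mono (hA₁U.trans inter_subset_right) (hA₂U.trans inter_subset_right)⟩

variable [MeasurableSpace X]

theorem exists_isCompact_subset_setLIntegral_le_add [T2Space X] [LocallyCompactSpace X]
    [SecondCountableTopology X] [BorelSpace X] (μ : Measure X) (f : X → ℝ≥0∞) {S : Set X}
    (hS : MeasurableSet S) (hfS : ∫⁻ x in S, f x ∂μ ≠ ∞) {ε : ℝ≥0∞} (hε : ε ≠ 0) :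
    ∃ C ⊆ S, IsCompact C ∧ ∫⁻ x in S, f x ∂μ ≤ ∫⁻ x in C, f x ∂μ + ε := by
  have : IsFiniteMeasure ((μ.restrict S).withDensity f) := isFiniteMeasure_withDensity hfS
  obtain ⟨C, hCS, hC, hSC⟩ :=
    hS.exists_isCompact_sdiff_lt (measure_ne_top ((μ.restrict S).withDensity f) S) hε
  refine ⟨C, hCS, hC, ?_⟩
  rw [withDensity_apply _ (hS.diff hC.measurableSet), Measure.restrict_restrict
    (hS.diff hC.measurableSet), inter_eq_left.2 sdiff_subset] at hSC
  rw [← lintegral_inter_add_sdiff f S hC.measurableSet, inter_eq_right.2 hCS]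
  exact add_le_add_right hSC.le _

variable (Ω : Set X) (Λ : Set X → ℝ≥0∞) (μ : Measure X)

def SuperadditiveOnSeparatedOpens : Prop :=
  ∀ A A₁ A₂ : Set X, IsOpen A → A ⊆ Ω → IsOpen A₁ → IsOpen A₂ → A₁ ⊆ A → A₂ ⊆ A →
    IsCompact (closure A₁) → IsCompact (closure A₂) → Disjoint (closure A₁) (closure A₂) →
    Λ A₁ + Λ A₂ ≤ Λ A

def LIntegralOnCompactsLE (f : X → ℝ≥0∞) : Prop :=
  ∀ A K : Set X, IsOpen A → A ⊆ Ω → IsCompact K → K ⊆ A → ∫⁻ x in K, f x ∂μ ≤ Λ A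

variable {Ω Λ μ}

namespace LIntegralOnCompactsLE

theorem sup [T2Space X] [LocallyCompactSpace X] [SecondCountableTopology X] [BorelSpace X]
    (hΛ : SuperadditiveOnSeparatedOpens Ω Λ) {f g : X → ℝ≥0∞} (hfm : Measurable f)
    (hgm : Measurable g) (hf : LIntegralOnCompactsLE Ω Λ μ f)
    (hg : LIntegralOnCompactsLE Ω Λ μ g) : LIntegralOnCompactsLE Ω Λ μ (f ⊔ g) := by
  intro A K hA hAΩ hK hKA
  set E := {x | g x ≤ f x}
  have hE : MeasurableSet E := measurableSet_le hgm hfm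
  have hKE : MeasurableSet (K ∩ E) := hK.measurableSet.inter hE
  have hKE' : MeasurableSet (K \ E) := hK.measurableSet.diff hE
  have hsplit : ∫⁻ x in K, (f ⊔ g) x ∂μ = ∫⁻ x in K ∩ E, f x ∂μ + ∫⁻ x in K \ E, g x ∂μ := by
    rw [← lintegral_inter_add_sdiff _ K hE]
    congr 1
    · exact setLIntegral_congr_fun hKE fun x hx => sup_eq_left.2 hx.2
    · exact setLIntegral_congr_fun hKE' fun x hx => sup_eq_right.2 (le_of_not_ge hx.2)
  rw [hsplit]
  refine ENNReal.le_of_forall_pos_le_add fun ε hε hΛA => ?_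
  have hε2 : (ε : ℝ≥0∞) / 2 ≠ 0 := by simpa using hε.ne'
  obtain ⟨C₁, hC₁KE, hC₁, hfC₁⟩ := exists_isCompact_subset_setLIntegral_le_add μ f hKE
    (((lintegral_mono_set inter_subset_left).trans (hf A K hA hAΩ hK hKA)).trans_lt hΛA).ne
    hε2
  obtain ⟨C₂, hC₂KE, hC₂, hgC₂⟩ := exists_isCompact_subset_setLIntegral_le_add μ g hKE'
    (((lintegral_mono_set sdiff_subset).trans (hg A K hA hAΩ hK hKA)).trans_lt hΛA).ne hε2
  have hC : Disjoint C₁ C₂ :=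
    disjoint_left.2 fun x hx₁ hx₂ => (hC₂KE hx₂).2 (hC₁KE hx₁).2
  obtain ⟨A₁, A₂, hA₁, hA₂, hC₁A₁, hC₂A₂, hA₁A, hA₂A, hA₁c, hA₂c, hA₁₂⟩ :=
    exists_isOpen_separation_isCompact_closure hA hC₁ hC₂
      (hC₁KE.trans (inter_subset_left.trans hKA)) (hC₂KE.trans (sdiff_subset.trans hKA)) hC
  calc ∫⁻ x in K ∩ E, f x ∂μ + ∫⁻ x in K \ E, g x ∂μ
      ≤ (∫⁻ x in C₁, f x ∂μ + ε / 2) + (∫⁻ x in C₂, g x ∂μ + ε / 2) := add_le_add hfC₁ hgC₂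
    _ = ∫⁻ x in C₁, f x ∂μ + ∫⁻ x in C₂, g x ∂μ + ε := by
      rw [add_add_add_comm, ENNReal.add_halves]
    _ ≤ Λ A₁ + Λ A₂ + ε := by
      gcongr
      · exact hf A₁ C₁ hA₁ (hA₁A.trans hAΩ) hC₁ hC₁A₁
      · exact hg A₂ C₂ hA₂ (hA₂A.trans hAΩ) hC₂ hC₂A₂
    _ ≤ Λ A + ε := by gcongr; exact hΛ A A₁ A₂ hA hAΩ hA₁ hA₂ hA₁A hA₂A hA₁c hA₂c hA₁₂

theorem partialSups [T2Space X] [LocallyCompactSpace X] [SecondCountableTopology X]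
    [BorelSpace X] (hΛ : SuperadditiveOnSeparatedOpens Ω Λ) {φ : ℕ → X → ℝ≥0∞}
    (hφm : ∀ j, Measurable (φ j)) (hφ : ∀ j, LIntegralOnCompactsLE Ω Λ μ (φ j)) (m : ℕ) :
    LIntegralOnCompactsLE Ω Λ μ (partialSups φ m) := by
  induction m with
  | zero => simpa using hφ 0
  | succ m ih =>
    rw [← Order.succ_eq_add_one, partialSups_succ]
    exact ih.sup hΛ (measurable_partialSups hφm m) (hφm _) (hφ _)

theorem iSup_of_monotone {φ : ℕ → X → ℝ≥0∞} (hφm : ∀ j, Measurable (φ j)) (hmono : Monotone φ)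
    (hφ : ∀ j, LIntegralOnCompactsLE Ω Λ μ (φ j)) :
    LIntegralOnCompactsLE Ω Λ μ (fun x => ⨆ j, φ j x) := by
  intro A K hA hAΩ hK hKA
  rw [lintegral_iSup hφm hmono]
  exact iSup_le fun j => hφ j A K hA hAΩ hK hKA

theorem iSup [T2Space X] [LocallyCompactSpace X] [SecondCountableTopology X] [BorelSpace X]
    (hΛ : SuperadditiveOnSeparatedOpens Ω Λ) {φ : ℕ → X → ℝ≥0∞} (hφm : ∀ j, Measurable (φ j))
    (hφ : ∀ j, LIntegralOnCompactsLE Ω Λ μ (φ j)) :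
    LIntegralOnCompactsLE Ω Λ μ (fun x => ⨆ j, φ j x) := by
  have hsup := iSup_of_monotone (measurable_partialSups hφm) (_root_.partialSups φ).monotone
    (partialSups hΛ hφm hφ)
  simpa only [← iSup_apply, iSup_partialSups_eq] using hsup

end LIntegralOnCompactsLE

theorem localization_sup_le_general {n : ℕ} (Ω : Set (Fin n → ℝ))
    (Λ : Set (Fin n → ℝ) → ℝ≥0∞)
    (hsuper : ∀ A A₁ A₂ : Set (Fin n → ℝ), IsOpen A → A ⊆ Ω →
      IsOpen A₁ → IsOpen A₂ → A₁ ⊆ A → A₂ ⊆ A →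
      IsCompact (closure A₁) → IsCompact (closure A₂) →
      Disjoint (closure A₁) (closure A₂) → Λ A₁ + Λ A₂ ≤ Λ A)
    (μ : Measure (Fin n → ℝ))
    (φ : ℕ → (Fin n → ℝ) → ℝ≥0∞) (hφ : ∀ j, Measurable (φ j))
    (hbound : ∀ (A K : Set (Fin n → ℝ)), IsOpen A → A ⊆ Ω → IsCompact K → K ⊆ A →
      ∀ j, ∫⁻ x in K, φ j x ∂μ ≤ Λ A) :
    ∀ (A K : Set (Fin n → ℝ)), IsOpen A → A ⊆ Ω → IsCompact K → K ⊆ A →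
      ∫⁻ x in K, ⨆ j, φ j x ∂μ ≤ Λ A :=
  LIntegralOnCompactsLE.iSup hsuper hφ fun j A K hA hAΩ hK hKA => hbound A K hA hAΩ hK hKA j

/-- Localization lemma, part 1 (cf. Braides, Lemma 15.2).  Let `Ω ⊆ ℝⁿ` be open, let `Λ` be a
`[0, +∞]`-valued set function on subsets of `Ω` which is superadditive on open sets with
disjoint compact closures, let `μ` be a positive Borel measure, and let `φ j` be nonnegative
Borel functions with `∫_K φ j dμ ≤ Λ A` for all open `A ⊆ Ω`, compact `K ⊆ A` and all `j`.
Then `∫_K (⨆ j, φ j) dμ ≤ Λ A` for all open `A ⊆ Ω` and compact `K ⊆ A`. -/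
theorem localization_sup_le {n : ℕ} (Ω : Set (Fin n → ℝ)) (hΩ : IsOpen Ω)
    (Λ : Set (Fin n → ℝ) → ℝ≥0∞)
    (hsuper : ∀ A A₁ A₂ : Set (Fin n → ℝ), IsOpen A → A ⊆ Ω →
      IsOpen A₁ → IsOpen A₂ → A₁ ⊆ A → A₂ ⊆ A →
      IsCompact (closure A₁) → IsCompact (closure A₂) →
      Disjoint (closure A₁) (closure A₂) → Λ A₁ + Λ A₂ ≤ Λ A)
    (μ : Measure (Fin n → ℝ))
    (φ : ℕ → (Fin n → ℝ) → ℝ≥0∞) (hφ : ∀ j, Measurable (φ j))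
    (hbound : ∀ (A K : Set (Fin n → ℝ)), IsOpen A → A ⊆ Ω → IsCompact K → K ⊆ A →
      ∀ j, ∫⁻ x in K, φ j x ∂μ ≤ Λ A) :
    ∀ (A K : Set (Fin n → ℝ)), IsOpen A → A ⊆ Ω → IsCompact K → K ⊆ A →
      ∫⁻ x in K, ⨆ j, φ j x ∂μ ≤ Λ A :=
  localization_sup_le_general Ω Λ hsuper μ φ hφ hbound
end

section
/- (Localization lemma, part 2.) Let Ω ⊆ ℝⁿ be open, let λ be a positive Borel measure on Ω which is finite on compact sets, and let φ_j : Ω → [0,+∞], j ∈ ℕ, be Borel functions. Let A ⊆ Ω be an open set and K ⊆ A a compact set such that ∫_K sup_{j∈ℕ} φ_j dλ < +∞. Then ∫_K sup_{j∈ℕ} φ_j dλ = sup { ∑_{j=1}^r ∫_{K_j} φ_j dλ : r ∈ ℕ, K₁,…,K_r pairwise disjoint compact subsets of K }. -/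
/-!
Monotone convergence reduces the integral of `⨆ j, φ j` to that of the finite suprema
`⨆ j : Fin r, φ j`. On `K` the finite supremum agrees with `φ j` on the Borel set `B j` of points
where `j` is the first index attaining it, and the sets `B j` partition `K`. Inner regularity of
the finite measures with density `φ j` on `B j` then replaces each `B j` by a compact subset, at
an arbitrarily small cost. The converse inequality holds because `φ j ≤ ⨆ i, φ i`.
-/

open MeasureTheory Function
open scoped ENNReal

section FinSupremum

variable {α : Type*} [CompleteLattice α]

theorem monotone_iSup_fin (f : ℕ → α) : Monotone fun r => ⨆ j : Fin r, f j :=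
  fun _ _ hrs => iSup_le fun j => le_iSup_of_le (Fin.castLE hrs j) le_rfl

theorem iSup_iSup_fin (f : ℕ → α) : ⨆ r, ⨆ j : Fin r, f j = ⨆ j, f j :=
  le_antisymm (iSup_le fun _ => iSup_le fun j => le_iSup f j)
    (iSup_le fun j => le_iSup_of_le (j + 1) (le_iSup_of_le ⟨j, j.lt_succ_self⟩ le_rfl))

end FinSupremum

section

variable {X : Type*} [MeasurableSpace X]

theorem lintegral_iSup_eq_iSup_lintegral_iSup_fin (μ : Measure X) {f : ℕ → X → ℝ≥0∞}
    (hf : ∀ j, Measurable (f j)) :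
    ∫⁻ x, ⨆ j, f j x ∂μ = ⨆ r, ∫⁻ x, ⨆ j : Fin r, f j x ∂μ := by
  simp_rw [← iSup_iSup_fin fun j => f j _]
  refine lintegral_iSup (fun r => Measurable.iSup fun j => hf j) fun r s hrs x => ?_
  exact monotone_iSup_fin (f · x) hrs

theorem sum_setLIntegral_le_setLIntegral {ι : Type*} [Fintype ι] (μ : Measure X)
    {f : ι → X → ℝ≥0∞} {g : X → ℝ≥0∞} (hfg : ∀ i, f i ≤ g) {s : ι → Set X} {K : Set X}
    (hs : ∀ i, MeasurableSet (s i)) (hsK : ∀ i, s i ⊆ K) (hdisj : Pairwise (Disjoint on s)) :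
    ∑ i, ∫⁻ x in s i, f i x ∂μ ≤ ∫⁻ x in K, g x ∂μ :=
  calc ∑ i, ∫⁻ x in s i, f i x ∂μ ≤ ∑ i, ∫⁻ x in s i, g x ∂μ :=
        Finset.sum_le_sum fun i _ => lintegral_mono (hfg i)
    _ = ∫⁻ x in ⋃ i, s i, g x ∂μ := by rw [lintegral_iUnion hs hdisj, tsum_fintype]
    _ ≤ ∫⁻ x in K, g x ∂μ := lintegral_mono_set (Set.iUnion_subset hsK)

theorem exists_measurableSet_partition_setLIntegral_iSup {ι : Type*} [Fintype ι] [LinearOrder ι]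
    [LocallyFiniteOrderBot ι] (μ : Measure X) {f : ι → X → ℝ≥0∞} (hf : ∀ i, Measurable (f i))
    {K : Set X} (hK : MeasurableSet K) :
    ∃ B : ι → Set X, (∀ i, MeasurableSet (B i)) ∧ (∀ i, B i ⊆ K) ∧
      Pairwise (Disjoint on B) ∧ ∫⁻ x in K, ⨆ i, f i x ∂μ = ∑ i, ∫⁻ x in B i, f i x ∂μ := by
  set E : ι → Set X := fun i => K ∩ {x | ⨆ j, f j x ≤ f i x}
  have hE : ∀ i, MeasurableSet (E i) := fun i =>
    hK.inter (measurableSet_le (Measurable.iSup hf) (hf i))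
  have hB : ∀ i, MeasurableSet (disjointed E i) := fun i =>
    disjointedRec (fun _ j ht => ht.diff (hE j)) (hE i)
  have hBE : ∀ i, disjointed E i ⊆ E i := disjointed_le E
  refine ⟨disjointed E, hB, fun i => (hBE i).trans Set.inter_subset_left,
    disjoint_disjointed E, ?_⟩
  rcases isEmpty_or_nonempty ι with _ | _
  · simp
  have hKE : ⋃ i, disjointed E i = K := by
    rw [iUnion_disjointed]
    refine subset_antisymm (Set.iUnion_subset fun _ => Set.inter_subset_left) fun x hx => ?_
    obtain ⟨i, hi⟩ := exists_eq_ciSup_of_finite (f := fun i => f i x)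
    exact Set.mem_iUnion.2 ⟨i, hx, hi.ge⟩
  rw [← hKE, lintegral_iUnion hB (disjoint_disjointed E), tsum_fintype]
  refine Finset.sum_congr rfl fun i _ => setLIntegral_congr_fun (hB i) fun x hx => ?_
  exact le_antisymm (hBE i hx).2 (le_iSup (f · x) i)

variable [TopologicalSpace X] [PolishSpace X] [BorelSpace X]

theorem exists_isCompact_subset_setLIntegral_lt_add (μ : Measure X) (f : X → ℝ≥0∞) {s : Set X}
    (hs : MeasurableSet s) (hfs : ∫⁻ x in s, f x ∂μ ≠ ∞) {ε : ℝ≥0∞} (hε : ε ≠ 0) :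
    ∃ C ⊆ s, IsCompact C ∧ ∫⁻ x in s, f x ∂μ < ∫⁻ x in C, f x ∂μ + ε := by
  set ν := (μ.restrict s).withDensity f
  have hν : ∀ t ⊆ s, MeasurableSet t → ν t = ∫⁻ x in t, f x ∂μ := fun t hts ht => by
    rw [withDensity_apply _ ht, Measure.restrict_restrict ht, Set.inter_eq_self_of_subset_left hts]
  obtain ⟨C, hCs, hC, hlt⟩ := hs.exists_isCompact_lt_add (μ := ν) (by rwa [hν s le_rfl hs]) hε
  rw [hν s le_rfl hs, hν C hCs hC.measurableSet] at hlt
  exact ⟨C, hCs, hC, hlt⟩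

theorem exists_isCompact_subsets_sum_setLIntegral_le_add {ι : Type*} [Fintype ι] (μ : Measure X)
    (f : ι → X → ℝ≥0∞) {B : ι → Set X} (hB : ∀ i, MeasurableSet (B i))
    (hfin : ∑ i, ∫⁻ x in B i, f i x ∂μ ≠ ∞) {ε : ℝ≥0∞} (hε : ε ≠ 0) :
    ∃ C : ι → Set X, (∀ i, C i ⊆ B i) ∧ (∀ i, IsCompact (C i)) ∧
      ∑ i, ∫⁻ x in B i, f i x ∂μ ≤ ∑ i, ∫⁻ x in C i, f i x ∂μ + ε := by
  have hει : ε / Fintype.card ι ≠ 0 := by simp [ENNReal.div_eq_zero_iff, hε]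
  choose C hCB hC hlt using fun i => exists_isCompact_subset_setLIntegral_lt_add μ (f i) (hB i)
    (ENNReal.sum_ne_top.1 hfin i (Finset.mem_univ i)) hει
  refine ⟨C, hCB, hC, ?_⟩
  calc ∑ i, ∫⁻ x in B i, f i x ∂μ ≤ ∑ i, (∫⁻ x in C i, f i x ∂μ + ε / Fintype.card ι) :=
        Finset.sum_le_sum fun i _ => (hlt i).le
    _ = ∑ i, ∫⁻ x in C i, f i x ∂μ + Fintype.card ι * (ε / Fintype.card ι) := by
        rw [Finset.sum_add_distrib, Finset.sum_const, Finset.card_univ, nsmul_eq_mul]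
    _ ≤ ∑ i, ∫⁻ x in C i, f i x ∂μ + ε := add_le_add_right ENNReal.mul_div_le _

end

theorem localization_sup_eq_general {n : ℕ}
    (μ : Measure (Fin n → ℝ))
    (φ : ℕ → (Fin n → ℝ) → ℝ≥0∞) (hφ : ∀ j, Measurable (φ j))
    (K : Set (Fin n → ℝ))
    (hK : IsCompact K)
    (hfin : ∫⁻ x in K, ⨆ j, φ j x ∂μ < ⊤) :
    ∫⁻ x in K, ⨆ j, φ j x ∂μ =
      sSup {s : ℝ≥0∞ | ∃ (r : ℕ) (Ks : Fin r → Set (Fin n → ℝ)),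
        (∀ j, IsCompact (Ks j)) ∧ (∀ j, Ks j ⊆ K) ∧
        (Pairwise fun i j => Disjoint (Ks i) (Ks j)) ∧
        s = ∑ j : Fin r, ∫⁻ x in Ks j, φ j.val x ∂μ} := by
  refine le_antisymm ?_ (sSup_le ?_)
  · rw [lintegral_iSup_eq_iSup_lintegral_iSup_fin _ hφ]
    refine iSup_le fun r => ?_
    obtain ⟨B, hB, hBK, hBdisj, hsum⟩ :=
      exists_measurableSet_partition_setLIntegral_iSup μ (fun j : Fin r => hφ j) hK.measurableSet
    have hsum_fin : ∑ j : Fin r, ∫⁻ x in B j, φ j x ∂μ ≠ ∞ := by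
      rw [← hsum]
      exact ((lintegral_mono fun x => iSup_le fun j : Fin r => le_iSup (φ · x) j).trans_lt hfin).ne
    refine ENNReal.le_of_forall_pos_le_add fun ε hε _ => ?_
    obtain ⟨C, hCB, hC, hle⟩ := exists_isCompact_subsets_sum_setLIntegral_le_add μ _ hB hsum_fin
      (ENNReal.coe_ne_zero.2 hε.ne')
    rw [hsum]
    refine hle.trans (add_le_add_left (le_sSup ?_) _)
    exact ⟨r, C, hC, fun j => (hCB j).trans (hBK j),
      fun i j hij => (hBdisj hij).mono (hCB i) (hCB j), rfl⟩
  · rintro s ⟨r, Ks, hKs, hKsK, hdisj, rfl⟩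
    exact sum_setLIntegral_le_setLIntegral μ (fun j x => le_iSup (φ · x) j.val)
      (fun j => (hKs j).measurableSet) hKsK hdisj

/-- Localization lemma, part 2 (cf. Braides, Lemma 15.2).  Let `Ω ⊆ ℝⁿ` be open, let `μ` be a
positive Borel measure finite on compact sets, and let `φ j` be nonnegative Borel functions.
If `A ⊆ Ω` is open, `K ⊆ A` is compact, and `∫_K (⨆ j, φ j) dμ < ∞`, then
`∫_K (⨆ j, φ j) dμ` equals the supremum of `∑_{j < r} ∫_{K_j} φ j dμ` over all finite families
`K_0, …, K_{r-1}` of pairwise disjoint compact subsets of `K`. -/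
theorem localization_sup_eq {n : ℕ} (Ω : Set (Fin n → ℝ)) (hΩ : IsOpen Ω)
    (μ : Measure (Fin n → ℝ)) [IsFiniteMeasureOnCompacts μ]
    (φ : ℕ → (Fin n → ℝ) → ℝ≥0∞) (hφ : ∀ j, Measurable (φ j))
    (A K : Set (Fin n → ℝ)) (hA : IsOpen A) (hAΩ : A ⊆ Ω)
    (hK : IsCompact K) (hKA : K ⊆ A)
    (hfin : ∫⁻ x in K, ⨆ j, φ j x ∂μ < ⊤) :
    ∫⁻ x in K, ⨆ j, φ j x ∂μ =
      sSup {s : ℝ≥0∞ | ∃ (r : ℕ) (Ks : Fin r → Set (Fin n → ℝ)),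
        (∀ j, IsCompact (Ks j)) ∧ (∀ j, Ks j ⊆ K) ∧
        (Pairwise fun i j => Disjoint (Ks i) (Ks j)) ∧
        s = ∑ j : Fin r, ∫⁻ x in Ks j, φ j.val x ∂μ} :=
  localization_sup_eq_general μ φ hφ K hK hfin
end
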